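/- Let p, r be positive integers and let the p-Catalan numbers be defined by ₚc₀ = 1 and ₚc_k = (1/k)·C(p·k, k−1) for k ≥ 1. Then for every n ≥ 0, the Raney number satisfies (r/(n·p+r))·C(n·p+r, n) = Σ ₚc_{i₁}·ₚc_{i₂}···ₚc_{i_r}, where the sum ranges over all r-tuples (i₁, …, i_r) of nonnegative integers with i₁ + ⋯ + i_r = n. (The equality may be read in the rational numbers.) -/

import Mathlib

/-- The `p`-Catalan numbers: `ₚc₀ = 1` and `ₚc_k = (1/k)·C(p·k, k-1)` for `k ≥ 1`. -/
def pCatalan (p : ℕ) : ℕ → ℚ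
  | 0 => 1
  | k + 1 => (1 / (k + 1 : ℚ)) * ((p * (k + 1)).choose k)

/-!
Extend the Raney numbers `R_{p,x}(n)` to `x = 0` through their division-free form, so that
`R_{p,0}(n) = [n = 0]` and `R_{p,1} = ₚc`. Pascal's rule gives
`R_{p,x+1}(n+1) = R_{p,x}(n+1) + R_{p,x+p}(n)`, and from it an induction on `n` and then
on `x` yields the convolution `∑_{i+j=n} ₚc_i R_{p,x}(j) = R_{p,x+1}(n)`. Convolving `R_{p,0}`
with `ₚc` `r` times therefore gives `R_{p,r}` as the sum over `r`-tuples.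
-/

open Finset

theorem Finset.Nat.sum_antidiagonalTuple_succ {M : Type*} [AddCommMonoid M] (k n : ℕ)
    (F : (Fin (k + 1) → ℕ) → M) :
    ∑ f ∈ antidiagonalTuple (k + 1) n, F f =
      ∑ ij ∈ antidiagonal n, ∑ g ∈ antidiagonalTuple k ij.2, F (Fin.cons ij.1 g) := by
  simp only [Finset.sum, antidiagonalTuple, Multiset.Nat.antidiagonalTuple,
    List.Nat.antidiagonalTuple, Multiset.map_coe, Multiset.sum_coe, List.flatMap,
    List.map_flatten, List.sum_flatten, List.map_map, Function.comp_def]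
  rfl

lemma pCatalan_eq (p n : ℕ) :
    pCatalan p n = 1 / (n * p + 1 : ℚ) * ((n * p + 1).choose n) := by
  cases n with
  | zero => simp [pCatalan]
  | succ n =>
    have key : ((p * (n + 1) + 1 : ℕ) : ℚ) * (p * (n + 1)).choose n =
        (p * (n + 1) + 1).choose (n + 1) * (n + 1 : ℕ) := by
      exact_mod_cast Nat.add_one_mul_choose_eq _ _
    simp only [pCatalan]
    rw [mul_comm (n + 1) p]
    field_simp
    push_cast at key ⊢
    linear_combination key

/-- `R_{p,x}(n) = x/(np+x)·C(np+x, n)` without the division, which keeps it meaningful at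
`x = 0`. -/
def raney (p x : ℕ) : ℕ → ℚ
  | 0 => 1
  | n + 1 => ((n + 1) * p + x).choose (n + 1) - p * ((n + 1) * p + x - 1).choose n

@[simp]
lemma raney_zero (p x : ℕ) : raney p x 0 = 1 := rfl

lemma raney_succ_of_eq {p x n m : ℕ} (h : (n + 1) * p + x = m + 1) :
    raney p x (n + 1) = (m + 1).choose (n + 1) - p * m.choose n := by
  simp [raney, h]

lemma mul_raney (p x n : ℕ) :
    (n * p + x : ℚ) * raney p x n = x * (n * p + x).choose n := by
  cases n with
  | zero => simp
  | succ n =>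
    rcases hN : (n + 1) * p + x with _ | m
    · obtain ⟨rfl, rfl⟩ : p = 0 ∧ x = 0 := by simpa using hN
      simp
    · rw [raney_succ_of_eq hN]
      have hN' : ((n + 1 : ℕ) : ℚ) * p + x = m + 1 := by exact_mod_cast hN
      have key : ((m + 1 : ℕ) : ℚ) * m.choose n = (m + 1).choose (n + 1) * (n + 1 : ℕ) := by
        exact_mod_cast Nat.add_one_mul_choose_eq m n
      push_cast at hN' key ⊢
      linear_combination -p * (m.choose n : ℚ) * hN' - p * key

lemma raney_eq_div_mul_choose {p x : ℕ} (hx : 0 < x) (n : ℕ) :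
    raney p x n = x / (n * p + x : ℚ) * (n * p + x).choose n := by
  have hpos : (n * p + x : ℚ) ≠ 0 := by positivity
  rw [div_mul_eq_mul_div, eq_div_iff hpos, mul_comm, mul_raney]

lemma raney_zero_left {p : ℕ} (hp : 0 < p) (n : ℕ) : raney p 0 (n + 1) = 0 := by
  have h := mul_raney p 0 (n + 1)
  rw [Nat.cast_zero, zero_mul, add_zero] at h
  exact (mul_eq_zero.mp h).resolve_left (by positivity)

lemma raney_one (p n : ℕ) : raney p 1 n = pCatalan p n := by
  rw [raney_eq_div_mul_choose one_pos, pCatalan_eq, Nat.cast_one]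

lemma raney_succ_succ {p : ℕ} (hp : 0 < p) (x n : ℕ) :
    raney p (x + 1) (n + 1) = raney p x (n + 1) + raney p (x + p) n := by
  cases n with
  | zero => simp [raney]
  | succ n =>
    obtain ⟨m, hm⟩ : ∃ m, (n + 2) * p + x = m + 1 := ⟨(n + 2) * p + x - 1, by
      have : 0 < (n + 2) * p := by positivity
      omega⟩
    rw [raney_succ_of_eq (m := m + 1) (by rw [← hm]; ring), raney_succ_of_eq hm,
      raney_succ_of_eq (by rw [← hm]; ring), Nat.choose_succ_succ' (m + 1),
      Nat.choose_succ_succ' m]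
    push_cast
    ring

lemma sum_antidiagonal_pCatalan_mul_raney {p : ℕ} (hp : 0 < p) (n x : ℕ) :
    ∑ ij ∈ antidiagonal n, pCatalan p ij.1 * raney p x ij.2 = raney p (x + 1) n := by
  induction n generalizing x with
  | zero => simp [pCatalan]
  | succ n ih =>
    induction x with
    | zero =>
      rw [Nat.sum_antidiagonal_succ']
      simp [raney_zero_left hp, raney_one]
    | succ x ihx =>
      rw [Nat.sum_antidiagonal_succ'] at ihx ⊢
      calc pCatalan p (n + 1) * raney p (x + 1) 0 +
            ∑ ij ∈ antidiagonal n, pCatalan p ij.1 * raney p (x + 1) (ij.2 + 1)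
          = (pCatalan p (n + 1) * raney p x 0 +
              ∑ ij ∈ antidiagonal n, pCatalan p ij.1 * raney p x (ij.2 + 1)) +
            ∑ ij ∈ antidiagonal n, pCatalan p ij.1 * raney p (x + p) ij.2 := by
            simp only [raney_succ_succ hp, raney_zero, mul_add, sum_add_distrib]
            ring
        _ = raney p (x + 1) (n + 1) + raney p (x + p + 1) n := by rw [ihx, ih]
        _ = raney p (x + 1 + 1) (n + 1) := by rw [raney_succ_succ hp (x + 1), add_right_comm x p]

lemma sum_antidiagonalTuple_prod_pCatalan {p : ℕ} (hp : 0 < p) (r n : ℕ) :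
    ∑ f ∈ Nat.antidiagonalTuple r n, ∏ i, pCatalan p (f i) = raney p r n := by
  induction r generalizing n with
  | zero => cases n <;> simp [raney_zero_left hp]
  | succ r ih =>
    rw [Nat.sum_antidiagonalTuple_succ, ← sum_antidiagonal_pCatalan_mul_raney hp]
    refine sum_congr rfl fun ij _ => ?_
    simp only [Fin.prod_univ_succ, Fin.cons_zero, Fin.cons_succ, ← mul_sum, ih]

/-- Hilton–Pedersen decomposition of the Raney numbers:
`R_{p,r}(n) = (r/(np+r))·C(np+r, n) = Σ_{i₁+⋯+i_r = n} ₚc_{i₁}···ₚc_{i_r}`. -/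
theorem raney_eq_sum_pCatalan (p r : ℕ) (hp : 0 < p) (hr : 0 < r) (n : ℕ) :
    (r : ℚ) / (n * p + r) * ((n * p + r).choose n) =
      ∑ f ∈ Finset.Nat.antidiagonalTuple r n, ∏ i, pCatalan p (f i) := by
  rw [sum_antidiagonalTuple_prod_pCatalan hp, raney_eq_div_mul_choose hr]
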